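/- For all p > 0 and x ∈ ℝ one has ∂²φ/∂x²(x,p) ≤ υ·exp(x + 2υ·e^x). -/

import Mathlib

/-- The function `φ(x,p) = ln Σ_{n≥0} (υⁿ/n!)·exp(xn − (ap/2)n²)`. -/
noncomputable def phi (υ a x p : ℝ) : ℝ :=
  Real.log (∑' n : ℕ, (υ ^ n / (Nat.factorial n : ℝ)) *
    Real.exp (x * n - (a * p / 2) * (n : ℝ) ^ 2))

/-! With `c = ap/2 ≥ 0`, weights `wₙ(x) = υⁿ/n! · exp(xn − cn²)` and moments `Mₖ = Σ nᵏ wₙ`,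
`∂²φ/∂x² = M₂/M₀ − (M₁/M₀)²` is the variance of `n` under the weights `wₙ`, hence at most
`M₂/M₀ ≤ M₂` because `M₀ ≥ w₀ = 1`. Dropping the factor `exp(−cn²) ≤ 1` bounds `M₂` by its
value at `c = 0`, the second moment `(y + y²)eʸ` of the exponential series in `y = υeˣ`, and
`1 + y ≤ eʸ` gives `(y + y²)eʸ ≤ y e²ʸ = υ exp(x + 2υeˣ)`. -/

open Real
open scoped Nat

theorem summable_pow_mul_pow_div_factorial (k : ℕ) (y : ℝ) :
    Summable fun n : ℕ => (n : ℝ) ^ k * y ^ n / n ! := by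
  refine .of_norm_bounded (Real.summable_pow_div_factorial (2 ^ k * |y|)) fun n => ?_
  have hn : (n : ℝ) ^ k ≤ (2 ^ k) ^ n := by
    rw [← pow_mul, mul_comm, pow_mul]
    exact pow_le_pow_left₀ n.cast_nonneg (by exact_mod_cast Nat.lt_two_pow_self.le) k
  rw [norm_div, norm_mul, norm_pow, norm_pow, Real.norm_natCast, Real.norm_natCast,
    Real.norm_eq_abs, mul_pow]
  gcongr

noncomputable def phiMoment (υ c : ℝ) (k : ℕ) (z : ℝ) : ℝ :=
  ∑' n : ℕ, (n : ℝ) ^ k * (υ ^ n / n ! * exp (z * n - c * n ^ 2))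

section PhiMoment

variable {υ c : ℝ}

theorem phiMoment_zero_eq_tsum (υ : ℝ) (k : ℕ) (z : ℝ) :
    phiMoment υ 0 k z = ∑' n : ℕ, (n : ℝ) ^ k * (υ * exp z) ^ n / n ! := by
  refine tsum_congr fun n => ?_
  rw [zero_mul, sub_zero, mul_comm z, exp_nat_mul, mul_pow]
  ring

theorem phiMoment_term_le (hυ : 0 ≤ υ) (hc : 0 ≤ c) (k n : ℕ) (z : ℝ) :
    (n : ℝ) ^ k * (υ ^ n / n ! * exp (z * n - c * n ^ 2)) ≤
      (n : ℝ) ^ k * (υ * exp z) ^ n / n ! := by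
  have hexp : exp (z * n - c * n ^ 2) ≤ exp z ^ n := by
    rw [← exp_nat_mul, mul_comm (n : ℝ)]
    exact exp_le_exp.2 (sub_le_self _ (by positivity))
  calc _ ≤ (n : ℝ) ^ k * (υ ^ n / n ! * exp z ^ n) := by gcongr
    _ = _ := by ring

theorem summable_phiMoment (hυ : 0 ≤ υ) (hc : 0 ≤ c) (k : ℕ) (z : ℝ) :
    Summable fun n : ℕ => (n : ℝ) ^ k * (υ ^ n / n ! * exp (z * n - c * n ^ 2)) :=
  .of_nonneg_of_le (fun n => by positivity) (phiMoment_term_le hυ hc k · z)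
    (summable_pow_mul_pow_div_factorial k _)

theorem phiMoment_le_phiMoment_zero (hυ : 0 ≤ υ) (hc : 0 ≤ c) (k : ℕ) (z : ℝ) :
    phiMoment υ c k z ≤ phiMoment υ 0 k z := by
  rw [phiMoment_zero_eq_tsum]
  exact (summable_phiMoment hυ hc k z).tsum_le_tsum (phiMoment_term_le hυ hc k · z)
    (summable_pow_mul_pow_div_factorial k _)

theorem one_le_phiMoment_zeroth (hυ : 0 ≤ υ) (hc : 0 ≤ c) (z : ℝ) : 1 ≤ phiMoment υ c 0 z := by
  simpa [phiMoment] using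
    (summable_phiMoment hυ hc 0 z).le_tsum 0 fun n _ => by positivity

theorem hasDerivAt_phiMoment_term (υ c : ℝ) (k n : ℕ) (z : ℝ) :
    HasDerivAt (fun w => (n : ℝ) ^ k * (υ ^ n / n ! * exp (w * n - c * n ^ 2)))
      ((n : ℝ) ^ (k + 1) * (υ ^ n / n ! * exp (z * n - c * n ^ 2))) z :=
  ((((hasDerivAt_mul_const (n : ℝ)).sub_const (c * (n : ℝ) ^ 2)).exp.const_mul
    (υ ^ n / n !)).const_mul ((n : ℝ) ^ k)).congr_deriv (by ring)

theorem hasDerivAt_phiMoment (hυ : 0 ≤ υ) (hc : 0 ≤ c) (k : ℕ) (z : ℝ) :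
    HasDerivAt (phiMoment υ c k) (phiMoment υ c (k + 1) z) z := by
  refine hasDerivAt_tsum_of_isPreconnected
    (summable_pow_mul_pow_div_factorial (k + 1) (υ * exp (z + 1))) isOpen_Iio isPreconnected_Iio
    (fun n w _ => hasDerivAt_phiMoment_term υ c k n w) (fun n w hw => ?_)
    (Set.mem_Iio.2 (lt_add_one z)) (summable_phiMoment hυ hc k z) (Set.mem_Iio.2 (lt_add_one z))
  rw [Real.norm_of_nonneg (by positivity)]
  refine (phiMoment_term_le hυ hc (k + 1) n w).trans ?_
  gcongr
  exact (Set.mem_Iio.1 hw).le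

theorem phiMoment_zero_zero (υ : ℝ) : phiMoment υ 0 0 = fun z => exp (υ * exp z) := by
  funext z
  simp [phiMoment_zero_eq_tsum, Real.exp_eq_exp_ℝ, NormedSpace.exp_eq_tsum_div]

theorem phiMoment_zero_one (hυ : 0 ≤ υ) :
    phiMoment υ 0 1 = fun z => υ * exp z * exp (υ * exp z) := by
  funext z
  refine (hasDerivAt_phiMoment hυ le_rfl 0 z).unique ?_
  rw [phiMoment_zero_zero]
  exact ((hasDerivAt_exp z).const_mul υ).exp.congr_deriv (by ring)

theorem phiMoment_zero_two (hυ : 0 ≤ υ) (z : ℝ) :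
    phiMoment υ 0 2 z = (υ * exp z + (υ * exp z) ^ 2) * exp (υ * exp z) := by
  refine (hasDerivAt_phiMoment hυ le_rfl 1 z).unique ?_
  rw [phiMoment_zero_one hυ]
  exact (((hasDerivAt_exp z).const_mul υ).mul ((hasDerivAt_exp z).const_mul υ).exp).congr_deriv
    (by ring)

theorem deriv_deriv_log_phiMoment_zeroth (hυ : 0 ≤ υ) (hc : 0 ≤ c) (z : ℝ) :
    deriv (deriv fun w => log (phiMoment υ c 0 w)) z =
      (phiMoment υ c 2 z * phiMoment υ c 0 z - phiMoment υ c 1 z * phiMoment υ c 1 z) /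
        phiMoment υ c 0 z ^ 2 := by
  have hpos w : phiMoment υ c 0 w ≠ 0 := (one_pos.trans_le (one_le_phiMoment_zeroth hυ hc w)).ne'
  have hderiv : deriv (fun w => log (phiMoment υ c 0 w)) =
      fun w => phiMoment υ c 1 w / phiMoment υ c 0 w := by
    funext w
    exact ((hasDerivAt_phiMoment hυ hc 0 w).log (hpos w)).deriv
  rw [hderiv]
  exact ((hasDerivAt_phiMoment hυ hc 1 z).div (hasDerivAt_phiMoment hυ hc 0 z) (hpos z)).deriv

theorem deriv_deriv_log_phiMoment_zeroth_le (hυ : 0 ≤ υ) (hc : 0 ≤ c) (z : ℝ) :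
    deriv (deriv fun w => log (phiMoment υ c 0 w)) z ≤ phiMoment υ c 2 z := by
  rw [deriv_deriv_log_phiMoment_zeroth hυ hc]
  have hA := one_le_phiMoment_zeroth hυ hc z
  have hC : 0 ≤ phiMoment υ c 2 z := tsum_nonneg fun n => by positivity
  rw [div_le_iff₀ (by positivity)]
  nlinarith [mul_nonneg (mul_nonneg hC (zero_le_one.trans hA)) (sub_nonneg.2 hA),
    mul_self_nonneg (phiMoment υ c 1 z)]

end PhiMoment

theorem stmt_16 (υ a : ℝ) (hυ : 0 < υ) (ha : 1 < a) (p x : ℝ) (hp : 0 < p) :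
    deriv (deriv (fun x' => phi υ a x' p)) x ≤ υ * Real.exp (x + 2 * υ * Real.exp x) := by
  have hc : 0 ≤ a * p / 2 := by have := zero_lt_one.trans ha; positivity
  have hphi : (fun x' => phi υ a x' p) = fun z => log (phiMoment υ (a * p / 2) 0 z) := by
    funext z
    simp [phi, phiMoment]
  set y := υ * exp x
  have hy0 : 0 ≤ y := by positivity
  calc deriv (deriv fun x' => phi υ a x' p) x ≤ phiMoment υ (a * p / 2) 2 x :=
        hphi ▸ deriv_deriv_log_phiMoment_zeroth_le hυ.le hc x
    _ ≤ phiMoment υ 0 2 x := phiMoment_le_phiMoment_zero hυ.le hc 2 x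
    _ = y * ((1 + y) * exp y) := by rw [phiMoment_zero_two hυ.le]; ring
    _ ≤ y * (exp y * exp y) := by gcongr; linarith [add_one_le_exp y]
    _ = υ * exp (x + 2 * υ * exp x) := by
      rw [show x + 2 * υ * exp x = x + y + y by ring, exp_add, exp_add]; ring
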